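/- arXiv:2412.13036 — 2 statements merged into one kernel-verified Lean document; each statement's English description precedes it below -/
import Mathlib

section
/- Let 𝒳 and 𝒴 be standard Borel spaces, let P and Q be probability measures on 𝒳 × 𝒴 with 𝒴-marginals P_Y and Q_Y, and let κ_P and κ_Q be Markov kernels from 𝒴 to 𝒳 that disintegrate P and Q, i.e., P = P_Y ⊗ κ_P and Q = Q_Y ⊗ κ_Q (identifying 𝒳 × 𝒴 with 𝒴 × 𝒳 by the coordinate swap), so that κ_P(y) and κ_Q(y) are regular conditional distributions of X given Y = y under P and Q. Then D_JS(P ‖ Q) ≤ D_JS(P_Y ‖ Q_Y) + ∫ D_JS(κ_P(y) ‖ κ_Q(y)) dP_Y(y) + ∫ D_JS(κ_P(y) ‖ κ_Q(y)) dQ_Y(y). (Appendix Lemma 2: decomposition of the joint Jensen–Shannon divergence into a marginal term and two expected conditional terms.) -/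
open MeasureTheory ProbabilityTheory Real
open scoped ENNReal

/-- Kullback–Leibler divergence `KL(P ‖ Q)`: `∫ log (dP/dQ) dP` when `P ≪ Q` (and the
log-likelihood ratio is integrable), and `+∞` otherwise. -/
noncomputable def klDiv {Ω : Type*} [MeasurableSpace Ω] (P Q : Measure Ω) : ℝ≥0∞ :=
  open Classical in
  if P ≪ Q ∧ Integrable (llr P Q) P then ENNReal.ofReal (∫ ω, llr P Q ω ∂P) else ∞

/-- The midpoint measure `M = (1/2)·P + (1/2)·Q`. -/
noncomputable def midMeasure {Ω : Type*} [MeasurableSpace Ω] (P Q : Measure Ω) : Measure Ω :=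
  (2⁻¹ : ℝ≥0∞) • P + (2⁻¹ : ℝ≥0∞) • Q

/-- Jensen–Shannon divergence `D_JS(P ‖ Q) = (1/2)·KL(P ‖ M) + (1/2)·KL(Q ‖ M)` where
`M` is the midpoint measure. -/
noncomputable def jsDiv {Ω : Type*} [MeasurableSpace Ω] (P Q : Measure Ω) : ℝ≥0∞ :=
  2⁻¹ * klDiv P (midMeasure P Q) + 2⁻¹ * klDiv Q (midMeasure P Q)

/-!
Write `M_Y` for the midpoint of the marginals and `κ_M` for the pointwise midpoint of the two
kernels. The coordinate swap does not increase `D_JS`, and for every probability measure `R` the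
midpoint of two measures minimises `R ↦ KL(μ ‖ R) + KL(ν ‖ R)`; hence
`D_JS(P ‖ Q) ≤ ½ KL(P_Y ⊗ κ_P ‖ M_Y ⊗ κ_M) + ½ KL(Q_Y ⊗ κ_Q ‖ M_Y ⊗ κ_M)`. The chain rule splits
the first term into `½ KL(P_Y ‖ M_Y) + ∫ ½ KL(κ_P(y) ‖ κ_M(y)) dP_Y(y)`, and similarly for the
second; the marginal terms add up to `D_JS(P_Y ‖ Q_Y)`, and each conditional integrand is at most
`D_JS(κ_P(y) ‖ κ_Q(y))`.
-/

section Midpoint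

variable {α β : Type*} {mα : MeasurableSpace α} {mβ : MeasurableSpace β} {μ ν ρ : Measure α}

lemma two_smul_midMeasure (μ ν : Measure α) : (2 : ℝ≥0∞) • midMeasure μ ν = μ + ν := by
  simp only [midMeasure, smul_add, smul_smul,
    ENNReal.mul_inv_cancel two_ne_zero ENNReal.ofNat_ne_top, one_smul]

lemma le_two_smul_midMeasure_left (μ ν : Measure α) : μ ≤ (2 : ℝ≥0∞) • midMeasure μ ν := by
  rw [two_smul_midMeasure]
  exact Measure.le_add_right le_rfl

lemma le_two_smul_midMeasure_right (μ ν : Measure α) : ν ≤ (2 : ℝ≥0∞) • midMeasure μ ν := by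
  rw [two_smul_midMeasure]
  exact Measure.le_add_left le_rfl

lemma absolutelyContinuous_midMeasure_left (μ ν : Measure α) : μ ≪ midMeasure μ ν :=
  Measure.absolutelyContinuous_of_le_smul (le_two_smul_midMeasure_left μ ν)

lemma absolutelyContinuous_midMeasure_right (μ ν : Measure α) : ν ≪ midMeasure μ ν :=
  Measure.absolutelyContinuous_of_le_smul (le_two_smul_midMeasure_right μ ν)

lemma midMeasure_absolutelyContinuous (hμ : μ ≪ ρ) (hν : ν ≪ ρ) : midMeasure μ ν ≪ ρ :=
  (hμ.smul_left _).add_left (hν.smul_left _)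

instance [IsProbabilityMeasure μ] [IsProbabilityMeasure ν] :
    IsProbabilityMeasure (midMeasure μ ν) :=
  ⟨by simp [midMeasure, ENNReal.inv_two_add_inv_two]⟩

lemma integral_midMeasure {f : α → ℝ} (hμ : Integrable f μ) (hν : Integrable f ν) :
    ∫ x, f x ∂midMeasure μ ν = 2⁻¹ * ∫ x, f x ∂μ + 2⁻¹ * ∫ x, f x ∂ν := by
  rw [midMeasure, integral_add_measure (hμ.smul_measure (by simp)) (hν.smul_measure (by simp)),
    integral_smul_measure, integral_smul_measure]
  simp

lemma map_midMeasure {f : α → β} (hf : Measurable f) :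
    (midMeasure μ ν).map f = midMeasure (μ.map f) (ν.map f) := by
  simp only [midMeasure, Measure.map_add _ _ hf, Measure.map_smul]

end Midpoint

section LogLikelihoodRatio

variable {α : Type*} {mα : MeasurableSpace α} {μ ν ρ : Measure α}

lemma rnDeriv_le_of_le_smul [SigmaFinite ν] {c : ℝ≥0∞} (h : μ ≤ c • ν) :
    μ.rnDeriv ν ≤ᵐ[ν] fun _ ↦ c := by
  refine ae_le_of_forall_setLIntegral_le_of_sigmaFinite (μ.measurable_rnDeriv ν) fun s _ _ ↦ ?_
  simpa [mul_comm] using (Measure.setLIntegral_rnDeriv_le s).trans (h s)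

lemma integrable_llr_of_le_smul [IsFiniteMeasure μ] [IsFiniteMeasure ν] {c : ℝ≥0∞} (hc : c ≠ ∞)
    (h : μ ≤ c • ν) : Integrable (llr μ ν) μ := by
  rw [← integrable_rnDeriv_mul_log_iff (Measure.absolutelyContinuous_of_le_smul h)]
  obtain ⟨C, hC⟩ := isCompact_Icc.exists_bound_of_continuousOn
    (continuous_mul_log.continuousOn (s := Set.Icc 0 c.toReal))
  refine Integrable.of_bound (by fun_prop) C ?_
  filter_upwards [rnDeriv_le_of_le_smul h] with x hx
  exact hC _ ⟨ENNReal.toReal_nonneg, ENNReal.toReal_mono hc hx⟩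

lemma llr_ae_eq_llr_add_llr [SigmaFinite μ] [SigmaFinite ν] [SigmaFinite ρ]
    (hμν : μ ≪ ν) (hνρ : ν ≪ ρ) : llr μ ρ =ᵐ[μ] llr μ ν + llr ν ρ := by
  filter_upwards [(hμν.trans hνρ).ae_le (Measure.rnDeriv_mul_rnDeriv hμν (κ := ρ)),
    Measure.rnDeriv_pos hμν, hμν.ae_le (μ.rnDeriv_ne_top ν),
    hμν.ae_le (Measure.rnDeriv_pos hνρ), (hμν.trans hνρ).ae_le (ν.rnDeriv_ne_top ρ)]
    with x hmul hμν_pos hμν_top hνρ_pos hνρ_top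
  rw [Pi.add_apply, llr, llr, llr, ← hmul, Pi.mul_apply, ENNReal.toReal_mul,
    log_mul (ENNReal.toReal_ne_zero.2 ⟨hμν_pos.ne', hμν_top⟩)
      (ENNReal.toReal_ne_zero.2 ⟨hνρ_pos.ne', hνρ_top⟩)]

lemma integrable_llr_of_ac_of_integrable [SigmaFinite μ] [SigmaFinite ν] [SigmaFinite ρ]
    (hμν : μ ≪ ν) (hνρ : ν ≪ ρ) (hμν_int : Integrable (llr μ ν) μ)
    (hμρ_int : Integrable (llr μ ρ) μ) : Integrable (llr ν ρ) μ :=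
  (hμρ_int.sub hμν_int).congr <| (llr_ae_eq_llr_add_llr hμν hνρ).mono fun x hx ↦ by
    simp [hx]

lemma integral_llr_nonneg [IsFiniteMeasure μ] [IsFiniteMeasure ν] (hμν : μ ≪ ν)
    (h_eq : μ Set.univ = ν Set.univ) : 0 ≤ ∫ x, llr μ ν x ∂μ :=
  InformationTheory.toReal_klDiv_of_measure_eq hμν h_eq ▸ ENNReal.toReal_nonneg

lemma toReal_klDiv_eq_add_integral_llr [IsProbabilityMeasure μ] [IsProbabilityMeasure ν]
    [IsProbabilityMeasure ρ] (hμν : μ ≪ ν) (hνρ : ν ≪ ρ) (hμν_int : Integrable (llr μ ν) μ)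
    (hνρ_int : Integrable (llr ν ρ) μ) :
    (InformationTheory.klDiv μ ρ).toReal
      = (InformationTheory.klDiv μ ν).toReal + ∫ x, llr ν ρ x ∂μ := by
  simp only [InformationTheory.toReal_klDiv_of_measure_eq (hμν.trans hνρ) (by simp),
    InformationTheory.toReal_klDiv_of_measure_eq hμν (by simp)]
  rw [integral_congr_ae (llr_ae_eq_llr_add_llr hμν hνρ), integral_add' hμν_int hνρ_int]

end LogLikelihoodRatio

section JensenShannon

variable {α β : Type*} {mα : MeasurableSpace α} {mβ : MeasurableSpace β} {μ ν ρ : Measure α}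

/-- Mathlib's `klDiv` carries the correction term `ν univ - μ univ`, which vanishes here. -/
lemma klDiv_eq_informationTheory_klDiv (h : μ Set.univ = ν Set.univ) :
    klDiv μ ν = InformationTheory.klDiv μ ν := by
  rw [klDiv, InformationTheory.klDiv_def, measureReal_def, measureReal_def, h,
    add_sub_cancel_right]

lemma jsDiv_eq [IsProbabilityMeasure μ] [IsProbabilityMeasure ν] :
    jsDiv μ ν = 2⁻¹ * InformationTheory.klDiv μ (midMeasure μ ν)
      + 2⁻¹ * InformationTheory.klDiv ν (midMeasure μ ν) := by
  rw [jsDiv, klDiv_eq_informationTheory_klDiv (by simp),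
    klDiv_eq_informationTheory_klDiv (by simp)]

/-- With `m` the midpoint, `KL(μ ‖ ρ) = KL(μ ‖ m) + ∫ log (dm/dρ) dμ` and likewise for `ν`, so
the excess of the right-hand side is `2 KL(m ‖ ρ) ≥ 0`. -/
theorem klDiv_midMeasure_add_klDiv_midMeasure_le [IsProbabilityMeasure μ]
    [IsProbabilityMeasure ν] [IsProbabilityMeasure ρ] :
    InformationTheory.klDiv μ (midMeasure μ ν) + InformationTheory.klDiv ν (midMeasure μ ν)
      ≤ InformationTheory.klDiv μ ρ + InformationTheory.klDiv ν ρ := by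
  by_cases hμρ : InformationTheory.klDiv μ ρ = ∞
  · simp [hμρ]
  by_cases hνρ : InformationTheory.klDiv ν ρ = ∞
  · simp [hνρ]
  obtain ⟨hμρ_ac, hμρ_int⟩ := InformationTheory.klDiv_ne_top_iff.1 hμρ
  obtain ⟨hνρ_ac, hνρ_int⟩ := InformationTheory.klDiv_ne_top_iff.1 hνρ
  set m := midMeasure μ ν
  have hμm_ac : μ ≪ m := absolutelyContinuous_midMeasure_left μ ν
  have hνm_ac : ν ≪ m := absolutelyContinuous_midMeasure_right μ ν
  have hmρ_ac : m ≪ ρ := midMeasure_absolutelyContinuous hμρ_ac hνρ_ac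
  have hμm_int := integrable_llr_of_le_smul (by simp) (le_two_smul_midMeasure_left μ ν)
  have hνm_int := integrable_llr_of_le_smul (by simp) (le_two_smul_midMeasure_right μ ν)
  have hmρ_int_μ := integrable_llr_of_ac_of_integrable hμm_ac hmρ_ac hμm_int hμρ_int
  have hmρ_int_ν := integrable_llr_of_ac_of_integrable hνm_ac hmρ_ac hνm_int hνρ_int
  have hmρ_nonneg : 0 ≤ 2⁻¹ * ∫ x, llr m ρ x ∂μ + 2⁻¹ * ∫ x, llr m ρ x ∂ν :=
    integral_midMeasure hmρ_int_μ hmρ_int_ν ▸ integral_llr_nonneg hmρ_ac (by simp)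
  have hμm := InformationTheory.klDiv_ne_top hμm_ac hμm_int
  have hνm := InformationTheory.klDiv_ne_top hνm_ac hνm_int
  rw [← ENNReal.toReal_le_toReal (ENNReal.add_ne_top.2 ⟨hμm, hνm⟩)
      (ENNReal.add_ne_top.2 ⟨hμρ, hνρ⟩),
    ENNReal.toReal_add hμm hνm, ENNReal.toReal_add hμρ hνρ,
    toReal_klDiv_eq_add_integral_llr hμm_ac hmρ_ac hμm_int hmρ_int_μ,
    toReal_klDiv_eq_add_integral_llr hνm_ac hmρ_ac hνm_int hmρ_int_ν]
  linarith

lemma inv_two_mul_klDiv_midMeasure_left_le_jsDiv [IsProbabilityMeasure μ]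
    [IsProbabilityMeasure ν] : 2⁻¹ * InformationTheory.klDiv μ (midMeasure μ ν) ≤ jsDiv μ ν := by
  rw [jsDiv_eq]
  exact le_self_add

lemma inv_two_mul_klDiv_midMeasure_right_le_jsDiv [IsProbabilityMeasure μ]
    [IsProbabilityMeasure ν] : 2⁻¹ * InformationTheory.klDiv ν (midMeasure μ ν) ≤ jsDiv μ ν := by
  rw [jsDiv_eq]
  exact le_add_self

lemma jsDiv_le_klDiv_add_klDiv [IsProbabilityMeasure μ] [IsProbabilityMeasure ν]
    [IsProbabilityMeasure ρ] :
    jsDiv μ ν ≤ 2⁻¹ * InformationTheory.klDiv μ ρ + 2⁻¹ * InformationTheory.klDiv ν ρ := by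
  rw [jsDiv_eq, ← mul_add, ← mul_add]
  exact mul_le_mul_right klDiv_midMeasure_add_klDiv_midMeasure_le _

lemma jsDiv_map_le [IsProbabilityMeasure μ] [IsProbabilityMeasure ν] {f : α → β}
    (hf : Measurable f) : jsDiv (μ.map f) (ν.map f) ≤ jsDiv μ ν := by
  have := Measure.isProbabilityMeasure_map (μ := μ) hf.aemeasurable
  have := Measure.isProbabilityMeasure_map (μ := ν) hf.aemeasurable
  rw [jsDiv_eq, jsDiv_eq, ← map_midMeasure hf]
  gcongr <;> exact InformationTheory.klDiv_map_le _ _ hf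

end JensenShannon

section ChainRule

variable {α β : Type*} {mα : MeasurableSpace α} {mβ : MeasurableSpace β}
  [MeasurableSpace.CountableOrCountablyGenerated α β] {μ ν : Measure α} {κ η : Kernel α β}

open InformationTheory (klFun)

lemma rnDeriv_compProd_right_ae_eq [IsFiniteMeasure μ] [IsFiniteKernel κ] [IsFiniteKernel η]
    (h : ∀ᵐ a ∂μ, κ a ≪ η a) :
    (μ ⊗ₘ κ).rnDeriv (μ ⊗ₘ η) =ᵐ[μ ⊗ₘ η] fun p ↦ κ.rnDeriv η p.1 p.2 := by
  have h_eq : μ ⊗ₘ κ = (μ ⊗ₘ η).withDensity fun p ↦ κ.rnDeriv η p.1 p.2 := by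
    rw [← Measure.compProd_withDensity (Kernel.measurable_rnDeriv κ η)]
    exact Measure.compProd_congr (h.mono fun a ha ↦ (Kernel.withDensity_rnDeriv_eq ha).symm)
  rw [h_eq]
  exact Measure.rnDeriv_withDensity _ (by fun_prop)

lemma klDiv_compProd_right_eq_lintegral [IsFiniteMeasure μ] [IsFiniteKernel κ]
    [IsFiniteKernel η] (h : ∀ᵐ a ∂μ, κ a ≪ η a) :
    InformationTheory.klDiv (μ ⊗ₘ κ) (μ ⊗ₘ η) = ∫⁻ a, InformationTheory.klDiv (κ a) (η a) ∂μ := by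
  rw [InformationTheory.klDiv_eq_lintegral_klFun_of_ac
    (Measure.absolutelyContinuous_compProd_right_iff.2 h)]
  calc ∫⁻ p, ENNReal.ofReal (klFun ((μ ⊗ₘ κ).rnDeriv (μ ⊗ₘ η) p).toReal) ∂(μ ⊗ₘ η)
      = ∫⁻ p, ENNReal.ofReal (klFun (κ.rnDeriv η p.1 p.2).toReal) ∂(μ ⊗ₘ η) :=
        lintegral_congr_ae <| by
          filter_upwards [rnDeriv_compProd_right_ae_eq h] with p hp
          rw [hp]
    _ = ∫⁻ a, ∫⁻ b, ENNReal.ofReal (klFun (κ.rnDeriv η a b).toReal) ∂η a ∂μ :=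
        Measure.lintegral_compProd (by fun_prop)
    _ = ∫⁻ a, InformationTheory.klDiv (κ a) (η a) ∂μ := by
        refine lintegral_congr_ae ?_
        filter_upwards [h] with a ha
        rw [InformationTheory.klDiv_eq_lintegral_klFun_of_ac ha]
        refine lintegral_congr_ae ?_
        filter_upwards [Kernel.rnDeriv_eq_rnDeriv_measure (κ := κ) (η := η) (a := a)] with b hb
        rw [hb]

theorem klDiv_compProd_eq_add_lintegral [IsFiniteMeasure μ] [IsFiniteMeasure ν]
    [IsMarkovKernel κ] [IsMarkovKernel η] (h : ∀ᵐ a ∂μ, κ a ≪ η a) :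
    InformationTheory.klDiv (μ ⊗ₘ κ) (ν ⊗ₘ η)
      = InformationTheory.klDiv μ ν + ∫⁻ a, InformationTheory.klDiv (κ a) (η a) ∂μ := by
  rw [InformationTheory.klDiv_compProd_eq_add, klDiv_compProd_right_eq_lintegral h]

end ChainRule

section MidKernel

variable {α β : Type*} {mα : MeasurableSpace α} {mβ : MeasurableSpace β}

noncomputable def midKernel (κ η : Kernel α β) : Kernel α β where
  toFun a := midMeasure (κ a) (η a)
  measurable' := by
    refine Measure.measurable_of_measurable_coe _ fun s hs ↦ ?_
    simp only [midMeasure, Measure.coe_add, Measure.coe_smul, Pi.add_apply, Pi.smul_apply,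
      smul_eq_mul]
    exact ((κ.measurable_coe hs).const_mul _).add ((η.measurable_coe hs).const_mul _)

lemma midKernel_apply (κ η : Kernel α β) (a : α) :
    midKernel κ η a = midMeasure (κ a) (η a) := rfl

instance (κ η : Kernel α β) [IsMarkovKernel κ] [IsMarkovKernel η] :
    IsMarkovKernel (midKernel κ η) :=
  ⟨fun a ↦ by rw [midKernel_apply]; infer_instance⟩

end MidKernel

theorem jsDiv_decomposition_general
    {X Y : Type*} [MeasurableSpace X] [StandardBorelSpace X]
    [MeasurableSpace Y]
    (P Q : Measure (X × Y)) [IsProbabilityMeasure P] [IsProbabilityMeasure Q]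
    (κP κQ : Kernel Y X) [IsMarkovKernel κP] [IsMarkovKernel κQ]
    (hP : P = ((P.map Prod.snd) ⊗ₘ κP).map Prod.swap)
    (hQ : Q = ((Q.map Prod.snd) ⊗ₘ κQ).map Prod.swap) :
    jsDiv P Q ≤ jsDiv (P.map Prod.snd) (Q.map Prod.snd)
      + ∫⁻ y, jsDiv (κP y) (κQ y) ∂(P.map Prod.snd)
      + ∫⁻ y, jsDiv (κP y) (κQ y) ∂(Q.map Prod.snd) := by
  set μ := P.map Prod.snd
  set ν := Q.map Prod.snd
  have : IsProbabilityMeasure μ := Measure.isProbabilityMeasure_map measurable_snd.aemeasurable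
  have : IsProbabilityMeasure ν := Measure.isProbabilityMeasure_map measurable_snd.aemeasurable
  set κM := midKernel κP κQ
  have hκP : ∀ᵐ y ∂μ, κP y ≪ κM y := ae_of_all _ fun y ↦ absolutelyContinuous_midMeasure_left _ _
  have hκQ : ∀ᵐ y ∂ν, κQ y ≪ κM y := ae_of_all _ fun y ↦ absolutelyContinuous_midMeasure_right _ _
  calc jsDiv P Q
      ≤ jsDiv (μ ⊗ₘ κP) (ν ⊗ₘ κQ) := by
        conv_lhs => rw [hP, hQ]
        exact jsDiv_map_le measurable_swap
    _ ≤ 2⁻¹ * InformationTheory.klDiv (μ ⊗ₘ κP) (midMeasure μ ν ⊗ₘ κM)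
        + 2⁻¹ * InformationTheory.klDiv (ν ⊗ₘ κQ) (midMeasure μ ν ⊗ₘ κM) :=
        jsDiv_le_klDiv_add_klDiv
    _ = jsDiv μ ν + ∫⁻ y, 2⁻¹ * InformationTheory.klDiv (κP y) (κM y) ∂μ
        + ∫⁻ y, 2⁻¹ * InformationTheory.klDiv (κQ y) (κM y) ∂ν := by
        rw [klDiv_compProd_eq_add_lintegral hκP, klDiv_compProd_eq_add_lintegral hκQ, jsDiv_eq,
          lintegral_const_mul' _ _ (by simp), lintegral_const_mul' _ _ (by simp)]
        ring
    _ ≤ jsDiv μ ν + ∫⁻ y, jsDiv (κP y) (κQ y) ∂μ + ∫⁻ y, jsDiv (κP y) (κQ y) ∂ν := by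
        gcongr with y y
        exacts [inv_two_mul_klDiv_midMeasure_left_le_jsDiv,
          inv_two_mul_klDiv_midMeasure_right_le_jsDiv]

/-- Appendix Lemma 2: decomposition of the joint Jensen–Shannon divergence into a marginal
term and two expected conditional terms, where `κP`, `κQ` disintegrate `P`, `Q` over their
`Y`-marginals. -/
theorem jsDiv_decomposition
    {X Y : Type*} [MeasurableSpace X] [StandardBorelSpace X]
    [MeasurableSpace Y] [StandardBorelSpace Y]
    (P Q : Measure (X × Y)) [IsProbabilityMeasure P] [IsProbabilityMeasure Q]
    (κP κQ : Kernel Y X) [IsMarkovKernel κP] [IsMarkovKernel κQ]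
    (hP : P = ((P.map Prod.snd) ⊗ₘ κP).map Prod.swap)
    (hQ : Q = ((Q.map Prod.snd) ⊗ₘ κQ).map Prod.swap) :
    jsDiv P Q ≤ jsDiv (P.map Prod.snd) (Q.map Prod.snd)
      + ∫⁻ y, jsDiv (κP y) (κQ y) ∂(P.map Prod.snd)
      + ∫⁻ y, jsDiv (κP y) (κQ y) ∂(Q.map Prod.snd) :=
  jsDiv_decomposition_general P Q κP κQ hP hQ
end

section
/- In the OSHeDA setting, the relabeled target error satisfies Er(P_t^u, f_t) ≥ λ·Er(P_s^u, f_s) + (1 − λ)·Er(P_{t,u}, f_t) − √2·λ·C·(D_JS(P_{t,k}(Z) ‖ P_s(Z)))^{1/2}. (An intermediate inequality in the proof of Theorem 1, bounding the target open-set error from below by the relabeled source error and the unknown-class target error, up to a representation-distance term.) -/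
open MeasureTheory ProbabilityTheory Real
open scoped ENNReal

/-!
On the known part of the target the error is compared with the source error through the
pushforwards `P = P_{t,k}(Z)` and `Q = P_s(Z)`; on the unknown part the label is almost surely
`unk`, which yields the `(1 - λ)`-term. Against the midpoint measure `M` the densities satisfy
`p + q = 2`, so for a loss `g` with values in `[0, C]`,
`∫ g ∂Q - ∫ g ∂P = ∫ (q - p) (g - C / 2) ∂M ≤ C ∫ |p - 1| ∂M`.
The pointwise bound `(p - 1)² ≤ klFun p + klFun q` and Jensen's inequality then give
`(∫ |p - 1| ∂M)² ≤ KL(P ‖ M) + KL(Q ‖ M) = 2 D_JS(P ‖ Q)`.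
-/

open InformationTheory hiding klDiv
open Set
open scoped NNReal

lemma sq_sub_one_le_klFun_add_klFun_two_sub {x : ℝ} (hx₀ : 0 ≤ x) (hx₂ : x ≤ 2) :
    (x - 1) ^ 2 ≤ klFun x + klFun (2 - x) := by
  set φ : ℝ → ℝ := fun x ↦ klFun x + klFun (2 - x) - (x - 1) ^ 2
  have hφ' : ∀ x ∈ Ioo (0 : ℝ) 2, HasDerivAt φ (log x - log (2 - x) - 2 * (x - 1)) x := by
    rintro x ⟨hx₀, hx₂⟩
    have h₂ : HasDerivAt (fun x ↦ klFun (2 - x)) (-log (2 - x)) x := by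
      simpa [Function.comp_def] using (hasDerivAt_klFun (by linarith : 2 - x ≠ 0)).comp x
        ((hasDerivAt_id' x).const_sub 2)
    exact ((hasDerivAt_klFun hx₀.ne').add h₂).sub (((hasDerivAt_id' x).sub_const 1).pow 2)
      |>.congr_deriv (by ring)
  have hφ'' : ∀ x ∈ Ioo (0 : ℝ) 2,
      HasDerivAt (fun x ↦ log x - log (2 - x) - 2 * (x - 1)) (x⁻¹ + (2 - x)⁻¹ - 2) x := by
    rintro x ⟨hx₀, hx₂⟩
    have h₂ := ((hasDerivAt_id' x).const_sub 2).log (by linarith)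
    exact ((hasDerivAt_log hx₀.ne').sub h₂).sub (((hasDerivAt_id' x).sub_const 1).const_mul 2)
      |>.congr_deriv (by field_simp; ring)
  have hconvex : ConvexOn ℝ (Icc 0 2) φ := by
    refine convexOn_of_hasDerivWithinAt2_nonneg (convex_Icc 0 2) (by fun_prop)
      (f' := fun x ↦ log x - log (2 - x) - 2 * (x - 1)) (f'' := fun x ↦ x⁻¹ + (2 - x)⁻¹ - 2)
      (fun x hx ↦ ?_) (fun x hx ↦ ?_) (fun x hx ↦ ?_) <;> rw [interior_Icc] at hx
    · exact (hφ' x hx).hasDerivWithinAt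
    · exact (hφ'' x hx).hasDerivWithinAt
    · -- `x⁻¹ + (2 - x)⁻¹ - 2 = 2 (x - 1)² / (x (2 - x))`
      obtain ⟨hx₀, hx₂⟩ := hx
      have : 0 < 2 - x := by linarith
      rw [sub_nonneg, inv_add_inv hx₀.ne' this.ne', le_div_iff₀ (by positivity)]
      nlinarith [sq_nonneg (x - 1)]
  have hmin : IsMinOn φ (Icc 0 2) 1 := by
    refine hconvex.isMinOn_of_rightDeriv_eq_zero (by norm_num [interior_Icc]) ?_
    rw [(hφ' 1 (by norm_num)).hasDerivWithinAt.derivWithin (uniqueDiffWithinAt_Ioi 1)]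
    norm_num
  have := hmin ⟨hx₀, hx₂⟩
  norm_num [φ, klFun_one] at this
  linarith

lemma Continuous.integrable_comp_of_ae_mem_Icc {α E : Type*} [MeasurableSpace α]
    [NormedAddCommGroup E] {μ : Measure α} [IsFiniteMeasure μ] {g : ℝ → E} (hg : Continuous g)
    {f : α → ℝ} (hf : AEStronglyMeasurable f μ) {a b : ℝ} (hab : ∀ᵐ x ∂μ, f x ∈ Icc a b) :
    Integrable (fun x ↦ g (f x)) μ := by
  obtain ⟨B, hB⟩ := isCompact_Icc.exists_bound_of_continuousOn hg.continuousOn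
  exact .of_bound (hg.comp_aestronglyMeasurable hf) B (hab.mono fun x hx ↦ hB _ hx)

lemma sq_integral_le_integral_sq {α : Type*} [MeasurableSpace α] {μ : Measure α}
    [IsProbabilityMeasure μ] {f : α → ℝ} (hf : Integrable f μ)
    (hf₂ : Integrable (fun x ↦ f x ^ 2) μ) :
    (∫ x, f x ∂μ) ^ 2 ≤ ∫ x, f x ^ 2 ∂μ :=
  even_two.convexOn_pow.map_integral_le (continuous_pow 2).continuousOn isClosed_univ
    (ae_of_all _ fun _ ↦ mem_univ _) hf hf₂

lemma klDiv_eq_ofReal_integral_klFun {α : Type*} [MeasurableSpace α] {μ ν : Measure α}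
    [IsProbabilityMeasure μ] [IsProbabilityMeasure ν] (hμν : μ ≪ ν)
    (h_int : Integrable (fun x ↦ klFun (μ.rnDeriv ν x).toReal) ν) :
    klDiv μ ν = ENNReal.ofReal (∫ x, klFun (μ.rnDeriv ν x).toReal ∂ν) := by
  have h_llr := (integrable_klFun_rnDeriv_iff hμν).1 h_int
  rw [klDiv, if_pos ⟨hμν, h_llr⟩, integral_klFun_rnDeriv hμν h_llr]
  simp

section MidMeasure

variable {Ω : Type*} [MeasurableSpace Ω] (P Q : Measure Ω)

lemma midMeasure_comm : midMeasure P Q = midMeasure Q P := add_comm _ _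

lemma absolutelyContinuous_midMeasure_left_s7 : P ≪ midMeasure P Q :=
  (Measure.absolutelyContinuous_smul (by norm_num)).add_right _

lemma absolutelyContinuous_midMeasure_right_s7 : Q ≪ midMeasure P Q :=
  midMeasure_comm P Q ▸ absolutelyContinuous_midMeasure_left_s7 Q P

instance [IsFiniteMeasure P] [IsFiniteMeasure Q] : IsFiniteMeasure (midMeasure P Q) :=
  ⟨by simp [midMeasure, ENNReal.mul_lt_top, measure_lt_top]⟩

lemma ae_toReal_rnDeriv_midMeasure_add [IsFiniteMeasure P] [IsFiniteMeasure Q] :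
    ∀ᵐ x ∂midMeasure P Q,
      (P.rnDeriv (midMeasure P Q) x).toReal + (Q.rnDeriv (midMeasure P Q) x).toReal = 2 := by
  set M := midMeasure P Q
  have hPQ : P + Q = (2 : ℝ≥0) • M := by
    ext s hs
    simp [M, midMeasure, ENNReal.smul_def, ← mul_assoc, ENNReal.mul_inv_cancel]
  filter_upwards [hPQ ▸ Measure.rnDeriv_add P Q M, Measure.rnDeriv_smul_left M M 2,
    Measure.rnDeriv_self M, Measure.rnDeriv_lt_top P M, Measure.rnDeriv_lt_top Q M]
    with x hsum h2M hMM hP hQ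
  rw [← ENNReal.toReal_add hP.ne hQ.ne, ← Pi.add_apply, ← hsum, h2M, Pi.smul_apply, hMM]
  simp

/-- The total variation distance, through the densities `p`, `q` against the midpoint measure:
there `p + q = 2`, so `|p - q| / 2 = |p - 1|`. -/
noncomputable def tvDist : ℝ :=
  ∫ x, |(P.rnDeriv (midMeasure P Q) x).toReal - 1| ∂midMeasure P Q

variable [IsProbabilityMeasure P] [IsProbabilityMeasure Q]

instance : IsProbabilityMeasure (midMeasure P Q) :=
  ⟨by simp [midMeasure, ENNReal.inv_two_add_inv_two]⟩

lemma ae_toReal_rnDeriv_midMeasure_mem_Icc :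
    ∀ᵐ x ∂midMeasure P Q, (P.rnDeriv (midMeasure P Q) x).toReal ∈ Icc 0 2 := by
  filter_upwards [ae_toReal_rnDeriv_midMeasure_add P Q] with x hx
  exact ⟨ENNReal.toReal_nonneg,
    by linarith [ENNReal.toReal_nonneg (a := Q.rnDeriv (midMeasure P Q) x)]⟩

lemma integrable_klFun_toReal_rnDeriv_midMeasure :
    Integrable (fun x ↦ klFun (P.rnDeriv (midMeasure P Q) x).toReal) (midMeasure P Q) :=
  continuous_klFun.integrable_comp_of_ae_mem_Icc
    (Measure.measurable_rnDeriv _ _).ennreal_toReal.aestronglyMeasurable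
    (ae_toReal_rnDeriv_midMeasure_mem_Icc P Q)

lemma two_mul_toReal_jsDiv :
    2 * (jsDiv P Q).toReal = ∫ x, klFun (P.rnDeriv (midMeasure P Q) x).toReal ∂midMeasure P Q
      + ∫ x, klFun (Q.rnDeriv (midMeasure P Q) x).toReal ∂midMeasure P Q := by
  have hP := integrable_klFun_toReal_rnDeriv_midMeasure P Q
  have hQ := midMeasure_comm Q P ▸ integrable_klFun_toReal_rnDeriv_midMeasure Q P
  have h₀ (μ : Measure Ω) : 0 ≤ ∫ x, klFun (μ.rnDeriv (midMeasure P Q) x).toReal ∂midMeasure P Q :=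
    integral_nonneg fun _ ↦ klFun_nonneg ENNReal.toReal_nonneg
  rw [jsDiv, klDiv_eq_ofReal_integral_klFun (absolutelyContinuous_midMeasure_left_s7 P Q) hP,
    klDiv_eq_ofReal_integral_klFun (absolutelyContinuous_midMeasure_right_s7 P Q) hQ,
    ENNReal.toReal_add (by finiteness) (by finiteness), ENNReal.toReal_mul, ENNReal.toReal_mul,
    ENNReal.toReal_ofReal (h₀ P), ENNReal.toReal_ofReal (h₀ Q)]
  simp only [ENNReal.toReal_inv, ENNReal.toReal_ofNat]
  ring

lemma integral_sub_integral_le_two_mul_tvDist {h : Ω → ℝ} (hh : Measurable h) {B : ℝ}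
    (hB : ∀ x, |h x| ≤ B) : ∫ x, h x ∂Q - ∫ x, h x ∂P ≤ 2 * B * tvDist P Q := by
  set M := midMeasure P Q
  have hPM := absolutelyContinuous_midMeasure_left_s7 P Q
  have hQM := absolutelyContinuous_midMeasure_right_s7 P Q
  have hint (μ : Measure Ω) [IsFiniteMeasure μ] : Integrable h μ :=
    .of_bound hh.aestronglyMeasurable B (ae_of_all _ fun x ↦ hB x)
  have hPh := (integrable_toReal_rnDeriv_mul_iff hPM).2 (hint P)
  have hQh := (integrable_toReal_rnDeriv_mul_iff hQM).2 (hint Q)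
  have htv : Integrable (fun x ↦ |(P.rnDeriv M x).toReal - 1|) M :=
    (by fun_prop : Continuous fun y : ℝ ↦ |y - 1|).integrable_comp_of_ae_mem_Icc
      (Measure.measurable_rnDeriv _ _).ennreal_toReal.aestronglyMeasurable
      (ae_toReal_rnDeriv_midMeasure_mem_Icc P Q)
  rw [← integral_toReal_rnDeriv_mul hPM, ← integral_toReal_rnDeriv_mul hQM, tvDist,
    ← integral_const_mul, ← integral_sub hQh hPh]
  refine integral_mono_ae (hQh.sub hPh) (htv.const_mul _) ?_
  filter_upwards [ae_toReal_rnDeriv_midMeasure_add P Q] with x hx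
  set p := (P.rnDeriv M x).toReal
  set q := (Q.rnDeriv M x).toReal
  calc q * h x - p * h x = 2 * (1 - p) * h x := by rw [show q = 2 - p by linarith]; ring
    _ ≤ |2 * (1 - p) * h x| := le_abs_self _
    _ = 2 * |p - 1| * |h x| := by rw [abs_mul, abs_mul, abs_two, abs_sub_comm]
    _ ≤ 2 * B * |p - 1| := by nlinarith [abs_nonneg (p - 1), hB x]

lemma sq_tvDist_le_two_mul_jsDiv : tvDist P Q ^ 2 ≤ 2 * (jsDiv P Q).toReal := by
  set M := midMeasure P Q
  set p := fun x ↦ (P.rnDeriv M x).toReal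
  set q := fun x ↦ (Q.rnDeriv M x).toReal
  have hp := ae_toReal_rnDeriv_midMeasure_mem_Icc P Q
  have hp_meas : AEStronglyMeasurable p M :=
    (Measure.measurable_rnDeriv _ _).ennreal_toReal.aestronglyMeasurable
  have hklP := integrable_klFun_toReal_rnDeriv_midMeasure P Q
  have hklQ := midMeasure_comm Q P ▸ integrable_klFun_toReal_rnDeriv_midMeasure Q P
  have habs := (by fun_prop : Continuous fun y : ℝ ↦ |y - 1|).integrable_comp_of_ae_mem_Icc
    hp_meas hp
  have hsq := (by fun_prop : Continuous fun y : ℝ ↦ |y - 1| ^ 2).integrable_comp_of_ae_mem_Icc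
    hp_meas hp
  calc tvDist P Q ^ 2 ≤ ∫ x, |p x - 1| ^ 2 ∂M := sq_integral_le_integral_sq habs hsq
    _ ≤ ∫ x, (klFun (p x) + klFun (q x)) ∂M := by
        refine integral_mono_ae hsq (hklP.add hklQ) ?_
        filter_upwards [hp, ae_toReal_rnDeriv_midMeasure_add P Q] with x hx hsum
        rw [sq_abs, show q x = 2 - p x by simp only [p, q]; linarith]
        exact sq_sub_one_le_klFun_add_klFun_two_sub hx.1 hx.2
    _ = 2 * (jsDiv P Q).toReal := by rw [integral_add hklP hklQ, two_mul_toReal_jsDiv]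

lemma integral_sub_integral_le_sqrt_two_mul_sqrt_jsDiv {g : Ω → ℝ} (hg : Measurable g) {C : ℝ}
    (hC : 0 ≤ C) (hg₀ : ∀ x, 0 ≤ g x) (hgC : ∀ x, g x ≤ C) :
    ∫ x, g x ∂Q - ∫ x, g x ∂P ≤ √2 * C * √(jsDiv P Q).toReal := by
  have hint (μ : Measure Ω) [IsProbabilityMeasure μ] : Integrable g μ :=
    .of_bound hg.aestronglyMeasurable C
      (ae_of_all _ fun x ↦ by rw [Real.norm_of_nonneg (hg₀ x)]; exact hgC x)
  have htv : tvDist P Q ≤ √2 * √(jsDiv P Q).toReal := by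
    rw [← Real.sqrt_mul zero_le_two]
    exact Real.le_sqrt_of_sq_le (sq_tvDist_le_two_mul_jsDiv P Q)
  calc ∫ x, g x ∂Q - ∫ x, g x ∂P = ∫ x, (g x - C / 2) ∂Q - ∫ x, (g x - C / 2) ∂P := by
        rw [integral_sub (hint Q) (integrable_const _), integral_sub (hint P) (integrable_const _)]
        simp
    _ ≤ 2 * (C / 2) * tvDist P Q :=
        integral_sub_integral_le_two_mul_tvDist P Q (hg.sub_const _)
          fun x ↦ abs_sub_le_iff.2 ⟨by linarith [hgC x], by linarith [hg₀ x]⟩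
    _ ≤ C * (√2 * √(jsDiv P Q).toReal) := by
        rw [mul_div_cancel₀ C two_ne_zero]; exact mul_le_mul_of_nonneg_left htv hC
    _ = √2 * C * √(jsDiv P Q).toReal := by ring

end MidMeasure

lemma measureReal_mul_integral_cond {α : Type*} [MeasurableSpace α] (μ : Measure α)
    [IsFiniteMeasure μ] (s : Set α) (f : α → ℝ) :
    μ.real s * ∫ x, f x ∂μ[|s] = ∫ x in s, f x ∂μ := by
  rcases eq_or_ne (μ s) 0 with hs | hs
  · simp [Measure.restrict_eq_zero.2 hs, measureReal_def, hs]
  · rw [ProbabilityTheory.cond, integral_smul_measure, smul_eq_mul, ← mul_assoc,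
      ENNReal.toReal_inv, measureReal_def,
      mul_inv_cancel₀ (ENNReal.toReal_ne_zero.2 ⟨hs, by finiteness⟩), one_mul]

lemma integral_eq_measureReal_mul_integral_cond_add {α : Type*} [MeasurableSpace α]
    {μ : Measure α} [IsFiniteMeasure μ] {s : Set α} (hs : MeasurableSet s) {f : α → ℝ}
    (hf : Integrable f μ) :
    ∫ x, f x ∂μ = μ.real s * ∫ x, f x ∂μ[|s] + μ.real sᶜ * ∫ x, f x ∂μ[|sᶜ] := by
  rw [measureReal_mul_integral_cond, measureReal_mul_integral_cond, integral_add_compl hs hf]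

theorem osheda_open_set_error_lower_bound_general
    {Xs Xt Z Y : Type*} [MeasurableSpace Xs] [MeasurableSpace Xt]
    [MeasurableSpace Z] [MeasurableSpace Y]
    (K : Set Y) (hK : MeasurableSet K) (unk : Y)
    (Ps : Measure (Xs × Y)) (Pt : Measure (Xt × Y))
    [IsProbabilityMeasure Ps] [IsProbabilityMeasure Pt]
    (fs : Xs → Z) (ft : Xt → Z) (hfs : Measurable fs) (hft : Measurable ft)
    (ℓ : Z × Y → ℝ) (hℓ : Measurable ℓ) (C : ℝ) (hC : 0 ≤ C)
    (hℓ0 : ∀ z y, 0 ≤ ℓ (z, y)) (hℓC : ∀ z y, ℓ (z, y) ≤ C)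
    (lam : ℝ) (hlam : lam = (Pt {p | p.2 ∈ K}).toReal)
    (hlam0 : 0 < lam)
    (htgt : Pt {p | p.2 ∉ K ∧ p.2 ≠ unk} = 0) :
    ∫ p, ℓ (ft p.1, unk) ∂Pt ≥
      lam * ∫ p, ℓ (fs p.1, unk) ∂Ps
      + (1 - lam) * ∫ p, ℓ (ft p.1, p.2) ∂(Pt[|{p | p.2 ∉ K}])
      - Real.sqrt 2 * lam * C *
          Real.sqrt ((jsDiv ((Pt[|{p | p.2 ∈ K}]).map (fun p => ft p.1))
            (Ps.map (fun p => fs p.1))).toReal) := by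
  set A : Set (Xt × Y) := {p | p.2 ∈ K}
  have hA : MeasurableSet A := measurable_snd hK
  have hlamA : Pt.real A = lam := hlam.symm
  have : IsProbabilityMeasure (Pt[|A]) :=
    cond_isProbabilityMeasure fun h ↦ by simp [hlam, A, h] at hlam0
  have hloss : Measurable fun z ↦ ℓ (z, unk) := hℓ.comp measurable_prodMk_right
  have hgs : Measurable fun p : Xs × Y ↦ fs p.1 := hfs.comp measurable_fst
  have hgt : Measurable fun p : Xt × Y ↦ ft p.1 := hft.comp measurable_fst
  have := Measure.isProbabilityMeasure_map (μ := Ps) hgs.aemeasurable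
  have := Measure.isProbabilityMeasure_map (μ := Pt[|A]) hgt.aemeasurable
  have hJS := integral_sub_integral_le_sqrt_two_mul_sqrt_jsDiv
    ((Pt[|A]).map fun p ↦ ft p.1) (Ps.map fun p ↦ fs p.1) hloss hC (hℓ0 · unk) (hℓC · unk)
  rw [integral_map hgs.aemeasurable hloss.aestronglyMeasurable,
    integral_map hgt.aemeasurable hloss.aestronglyMeasurable] at hJS
  have hunk : ∀ᵐ p ∂Pt[|Aᶜ], p.2 = unk := by
    filter_upwards [ae_cond_mem hA.compl,
      cond_absolutelyContinuous.ae_le (measure_eq_zero_iff_ae_notMem.1 htgt)] with p hpK hp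
    by_contra hne
    exact hp ⟨hpK, hne⟩
  have hint : Integrable (fun p : Xt × Y ↦ ℓ (ft p.1, unk)) Pt :=
    .of_bound (hloss.comp hgt).aestronglyMeasurable C
      (ae_of_all _ fun p ↦ by rw [Real.norm_of_nonneg (hℓ0 _ _)]; exact hℓC _ _)
  rw [show {p : Xt × Y | p.2 ∉ K} = Aᶜ from rfl,
    integral_eq_measureReal_mul_integral_cond_add hA hint, probReal_compl_eq_one_sub hA, hlamA,
    integral_congr_ae (g := fun p ↦ ℓ (ft p.1, p.2)) (hunk.mono fun p hp ↦ by simp only [hp])]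
  nlinarith

/-- Intermediate inequality in the proof of Theorem 1: the target open-set error is bounded
below by the relabeled source error and the unknown-class target error, up to a
representation-distance term. -/
theorem osheda_open_set_error_lower_bound
    {Xs Xt Z Y : Type*} [MeasurableSpace Xs] [MeasurableSpace Xt]
    [MeasurableSpace Z] [MeasurableSpace Y]
    (K : Set Y) (hK : MeasurableSet K) (unk : Y) (hunk : unk ∉ K)
    (Ps : Measure (Xs × Y)) (Pt : Measure (Xt × Y))
    [IsProbabilityMeasure Ps] [IsProbabilityMeasure Pt]
    (fs : Xs → Z) (ft : Xt → Z) (hfs : Measurable fs) (hft : Measurable ft)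
    (ℓ : Z × Y → ℝ) (hℓ : Measurable ℓ) (C : ℝ) (hC : 0 ≤ C)
    (hℓ0 : ∀ z y, 0 ≤ ℓ (z, y)) (hℓC : ∀ z y, ℓ (z, y) ≤ C)
    (lam : ℝ) (hlam : lam = (Pt {p | p.2 ∈ K}).toReal)
    (hlam0 : 0 < lam) (hlam1 : lam < 1)
    (hsrc : Ps {p | p.2 ∉ K} = 0)
    (htgt : Pt {p | p.2 ∉ K ∧ p.2 ≠ unk} = 0) :
    ∫ p, ℓ (ft p.1, unk) ∂Pt ≥
      lam * ∫ p, ℓ (fs p.1, unk) ∂Ps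
      + (1 - lam) * ∫ p, ℓ (ft p.1, p.2) ∂(Pt[|{p | p.2 ∉ K}])
      - Real.sqrt 2 * lam * C *
          Real.sqrt ((jsDiv ((Pt[|{p | p.2 ∈ K}]).map (fun p => ft p.1))
            (Ps.map (fun p => fs p.1))).toReal) :=
  osheda_open_set_error_lower_bound_general K hK unk Ps Pt fs ft hfs hft ℓ hℓ C hC hℓ0 hℓC lam hlam
    hlam0 htgt
end
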